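/- arXiv:2308.01561 — 7 statements merged into one kernel-verified Lean document; each statement's English description precedes it below -/
import Mathlib

section
/- For any finite simple graph G with maximum degree Δ(G), there exists a d₂-transitive partition of G of size Δ(G)+1; in particular Tr_{d₂}(G) ≥ Δ(G)+1. -/
open SimpleGraph

/-- `P : Fin k → Set V` is a d₂-transitive partition of size `k` of the graph `G`:
its parts are nonempty, every vertex lies in exactly one part, and for `i < j`
every vertex of `P j` is within graph distance 2 of some vertex of `P i`. -/
def IsD2TransPartition {V : Type*} (G : SimpleGraph V) {k : ℕ} (P : Fin k → Set V) : Prop :=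
  (∀ i, (P i).Nonempty) ∧ (∀ v : V, ∃! i, v ∈ P i) ∧
  ∀ i j : Fin k, i < j → ∀ b ∈ P j, ∃ a ∈ P i, G.edist a b ≤ 2

/-- The d₂-transitivity `Tr_{d₂}(G)`: the maximum size of a d₂-transitive partition. -/
noncomputable def Trd2 {V : Type*} (G : SimpleGraph V) : ℕ :=
  sSup {k : ℕ | ∃ P : Fin k → Set V, IsD2TransPartition G P}

theorem stmt_0 {V : Type*} [Fintype V] [Nonempty V] (G : SimpleGraph V)
    [DecidableRel G.Adj] :
    (∃ P : Fin (G.maxDegree + 1) → Set V, IsD2TransPartition G P) ∧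
      G.maxDegree + 1 ≤ Trd2 G := by
  classical
  obtain ⟨v, hv⟩ := G.exists_maximal_degree_vertex
  have hcard : Fintype.card (G.neighborSet v) = G.maxDegree := by
    rw [G.card_neighborSet_eq_degree, ← hv]
  let e : Fin G.maxDegree ≃ G.neighborSet v := (Fintype.equivFinOfCardEq hcard).symm
  set f : Fin G.maxDegree → V := fun i => (e i : V) with hf
  have hfadj : ∀ i, G.Adj v (f i) := fun i => (e i).2
  have hfinj : Function.Injective f := fun a b h => e.injective (Subtype.ext h)
  have hfsurj : ∀ w, G.Adj v w → ∃ i, f i = w := fun w hw =>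
    ⟨e.symm ⟨w, hw⟩, by simp [f]⟩
  set P : Fin (G.maxDegree + 1) → Set V :=
    fun i => Fin.cases {w | ¬ G.Adj v w} (fun j => {f j}) i with hP
  have hP0 : P 0 = {w | ¬ G.Adj v w} := rfl
  have hPs : ∀ j, P j.succ = {f j} := fun j => rfl
  have hpart : IsD2TransPartition G P := by
    refine ⟨?_, ?_, ?_⟩
    · intro i
      induction i using Fin.cases with
      | zero => exact ⟨v, by rw [hP0]; exact G.irrefl⟩
      | succ j => exact ⟨f j, by rw [hPs]; rfl⟩
    · intro w
      by_cases hw : G.Adj v w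
      · obtain ⟨j, hj⟩ := hfsurj w hw
        refine ⟨j.succ, show w ∈ P j.succ by rw [hPs]; exact hj.symm, ?_⟩
        intro i hi
        induction i using Fin.cases with
        | zero => rw [hP0] at hi; exact absurd hw hi
        | succ j' =>
          rw [hPs] at hi
          exact congrArg Fin.succ (hfinj (hi.symm.trans hj.symm).symm).symm
      · refine ⟨0, show w ∈ P 0 by rw [hP0]; exact hw, ?_⟩
        intro i hi
        induction i using Fin.cases with
        | zero => rfl
        | succ j' =>
          rw [hPs] at hi
          exact absurd (hi ▸ hfadj j') hw
    · intro i j hij b hb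
      induction j using Fin.cases with
      | zero => exact absurd hij (Fin.not_lt_zero i)
      | succ j' =>
        rw [hPs] at hb
        subst hb
        induction i using Fin.cases with
        | zero =>
          refine ⟨v, by rw [hP0]; exact G.irrefl, ?_⟩
          refine le_trans (SimpleGraph.Walk.edist_le (.cons (hfadj j') .nil)) ?_
          simp
        | succ i' =>
          refine ⟨f i', by rw [hPs]; rfl, ?_⟩
          refine le_trans (SimpleGraph.Walk.edist_le (.cons (hfadj i').symm (.cons (hfadj j') .nil))) ?_
          simp
  refine ⟨⟨P, hpart⟩, ?_⟩
  have hbdd : BddAbove {k : ℕ | ∃ Q : Fin k → Set V, IsD2TransPartition G Q} := by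
    refine ⟨Fintype.card V, ?_⟩
    rintro k ⟨Q, hQne, hQuniq, -⟩
    have : ∀ i : Fin k, ∃ x, x ∈ Q i := fun i => hQne i
    choose g hg using this
    have hginj : Function.Injective g := by
      intro a b hab
      obtain ⟨i, -, huniq⟩ := hQuniq (g a)
      exact (huniq a (hg a)).trans (huniq b (hab ▸ hg b)).symm
    simpa using Fintype.card_le_of_injective g hginj
  exact le_csSup hbdd ⟨P, hpart⟩
end

section
/- For any finite simple graph G, Tr_{d₂}(G) ≤ Δ(G)² + 1, where Δ(G) is the maximum degree of G. -/
open SimpleGraph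

/-!
Fix a vertex `b` of the last part. Every part contains a vertex within distance 2 of `b`, and
these representatives are distinct because the parts are disjoint. The closed ball of radius 2
around `b` has at most `Δ² + 1` vertices: besides `b`, each of the at most `Δ` neighbours `w`
of `b` contributes itself and its at most `Δ - 1` neighbours other than `b`.
-/

open Finset Function

namespace SimpleGraph

variable {V : Type*} [Fintype V] (G : SimpleGraph V) [DecidableRel G.Adj]

lemma card_filter_edist_le_two_le [DecidableEq V] (b : V) :
    #{a | G.edist b a ≤ 2} ≤ G.maxDegree ^ 2 + 1 := by
  set ball := insert b ((G.neighborFinset b).biUnion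
    fun w ↦ insert w ((G.neighborFinset w).erase b))
  have hsub : ({a | G.edist b a ≤ 2} : Finset V) ⊆ ball := by
    intro a ha
    replace ha := not_lt.2 (mem_filter.1 ha).2
    rcases eq_or_ne b a with rfl | hne
    · exact mem_insert_self _ _
    refine mem_insert_of_mem (mem_biUnion.2 ?_)
    by_cases hadj : G.Adj b a
    · exact ⟨a, by simpa using hadj, mem_insert_self _ _⟩
    obtain ⟨w, hw⟩ : (G.commonNeighbors b a).Nonempty := by
      by_contra hempty
      exact ha (two_lt_edist_iff.2 ⟨hne, hadj, Set.not_nonempty_iff_eq_empty.1 hempty⟩)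
    rw [mem_commonNeighbors] at hw
    exact ⟨w, by simpa using hw.1,
      mem_insert_of_mem (mem_erase.2 ⟨hne.symm, by simpa using hw.2.symm⟩)⟩
  have hspoke : ∀ w ∈ G.neighborFinset b,
      #(insert w ((G.neighborFinset w).erase b)) ≤ G.maxDegree := by
    intro w hw
    have hbw : b ∈ G.neighborFinset w := by simpa [adj_comm] using hw
    calc #(insert w ((G.neighborFinset w).erase b))
        ≤ #((G.neighborFinset w).erase b) + 1 := card_insert_le _ _
      _ = G.degree w := by rw [card_erase_add_one hbw, card_neighborFinset_eq_degree]
      _ ≤ G.maxDegree := G.degree_le_maxDegree w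
  calc #{a | G.edist b a ≤ 2}
      ≤ #ball := card_le_card hsub
    _ ≤ ∑ w ∈ G.neighborFinset b, #(insert w ((G.neighborFinset w).erase b)) + 1 :=
      (card_insert_le _ _).trans (by gcongr; exact card_biUnion_le)
    _ ≤ G.degree b * G.maxDegree + 1 := by
      grw [sum_le_card_nsmul _ _ _ hspoke, card_neighborFinset_eq_degree, smul_eq_mul]
    _ ≤ G.maxDegree ^ 2 + 1 := by grw [G.degree_le_maxDegree b, sq]

end SimpleGraph

namespace IsD2TransPartition

variable {V : Type*} {G : SimpleGraph V} {k : ℕ} {P : Fin k → Set V}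

lemma injective_of_mem (hP : IsD2TransPartition G P) {f : Fin k → V} (hf : ∀ i, f i ∈ P i) :
    Injective f :=
  fun i i' h ↦ (hP.2.1 (f i)).unique (hf i) (h ▸ hf i')

lemma exists_mem_edist_le_two (hP : IsD2TransPartition G P) {i j : Fin k} (hij : i ≤ j)
    {b : V} (hb : b ∈ P j) : ∃ a ∈ P i, G.edist a b ≤ 2 := by
  rcases hij.eq_or_lt with rfl | hlt
  · exact ⟨b, hb, by simp⟩
  · exact hP.2.2 i j hlt b hb

lemma le_maxDegree_sq_add_one [Fintype V] [DecidableRel G.Adj] (hP : IsD2TransPartition G P) :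
    k ≤ G.maxDegree ^ 2 + 1 := by
  classical
  cases k with
  | zero => omega
  | succ n =>
    obtain ⟨b, hb⟩ := hP.1 (Fin.last n)
    choose f hf hfb using fun i ↦ hP.exists_mem_edist_le_two (Fin.le_last i) hb
    calc n + 1 = #(univ.map ⟨f, hP.injective_of_mem hf⟩) := by simp
      _ ≤ #{a | G.edist b a ≤ 2} := by
        refine card_le_card fun a ha ↦ ?_
        obtain ⟨i, -, rfl⟩ := mem_map.1 ha
        simpa [edist_comm] using hfb i
      _ ≤ G.maxDegree ^ 2 + 1 := G.card_filter_edist_le_two_le b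

end IsD2TransPartition

theorem stmt_1 {V : Type*} [Fintype V] (G : SimpleGraph V) [DecidableRel G.Adj] :
    Trd2 G ≤ G.maxDegree ^ 2 + 1 :=
  csSup_le' fun _ ⟨_, hP⟩ ↦ hP.le_maxDegree_sq_add_one
end

section
/- If H is a subgraph of a finite simple graph G (on a subset of the vertices of G with a subset of the edges), then Tr_{d₂}(H) ≤ Tr_{d₂}(G). -/
open SimpleGraph

lemma edist_map_le {V W : Type*} {A : SimpleGraph V} {B : SimpleGraph W} (f : A →g B)
    (a b : V) : B.edist (f a) (f b) ≤ A.edist a b := by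
  rcases eq_or_ne (A.edist a b) ⊤ with h | h
  · simp [h]
  · obtain ⟨p, hp⟩ := A.exists_walk_of_edist_ne_top h
    calc B.edist (f a) (f b) ≤ (p.map f).length := B.edist_le _
      _ = A.edist a b := by rw [SimpleGraph.Walk.length_map]; exact_mod_cast hp

lemma bddAbove_trd2_set {V : Type*} [Fintype V] (G : SimpleGraph V) :
    BddAbove {k : ℕ | ∃ P : Fin k → Set V, IsD2TransPartition G P} := by
  refine ⟨Fintype.card V, ?_⟩
  rintro k ⟨P, hP1, hP2, -⟩
  choose f hf using hP1
  have hinj : Function.Injective f := by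
    intro i j hij
    obtain ⟨c, hc, huniq⟩ := hP2 (f j)
    have hi : i = c := huniq i (hij ▸ hf i)
    have hj : j = c := huniq j (hf j)
    rw [hi, hj]
  simpa using Fintype.card_le_of_injective f hinj

/-- If `H` is a subgraph of `G` (a subset of the vertices together with a subset
of the edges among them), then `Tr_{d₂}(H) ≤ Tr_{d₂}(G)`. -/
theorem stmt_3 {V : Type*} [Fintype V] (G : SimpleGraph V) (H : G.Subgraph) :
    Trd2 H.coe ≤ Trd2 G := by
  apply csSup_le'
  rintro k ⟨P, hP1, hP2, hP3⟩
  rcases Nat.eq_zero_or_pos k with rfl | hk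
  · exact Nat.zero_le _
  set z : Fin k := ⟨0, hk⟩ with hz
  set Q : Fin k → Set V :=
    fun i => (Subtype.val '' P i) ∪ (if i = z then {v | v ∉ H.verts} else ∅) with hQ
  have hmem : k ∈ {k : ℕ | ∃ P : Fin k → Set V, IsD2TransPartition G P} := by
    refine ⟨Q, ?_, ?_, ?_⟩
    · intro i
      exact Set.Nonempty.mono Set.subset_union_left ((hP1 i).image _)
    · intro v
      by_cases hv : v ∈ H.verts
      · obtain ⟨i, hi, huniq⟩ := hP2 ⟨v, hv⟩
        refine ⟨i, Or.inl ⟨⟨v, hv⟩, hi, rfl⟩, ?_⟩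
        rintro j (⟨a, ha, rfl⟩ | hj)
        · have : a = ⟨a.val, hv⟩ := Subtype.ext rfl
          exact huniq j (this ▸ ha)
        · by_cases hjz : j = z
          · rw [hjz] at hj; simp only [if_pos rfl] at hj; exact absurd hv hj
          · simp only [if_neg hjz] at hj; exact absurd hj (Set.notMem_empty v)
      · refine ⟨z, Or.inr (by simp [hv]), ?_⟩
        rintro j (⟨a, ha, rfl⟩ | hj)
        · exact absurd a.2 hv
        · by_cases hjz : j = z
          · exact hjz
          · simp only [if_neg hjz] at hj; exact absurd hj (Set.notMem_empty v)
    · intro i j hij b hb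
      have hjz : j ≠ z := by
        rintro rfl
        exact absurd hij (by simp [hz, Fin.lt_iff_val_lt_val])
      rcases hb with ⟨b', hb', rfl⟩ | hb
      · obtain ⟨a', ha', hd⟩ := hP3 i j hij b' hb'
        refine ⟨a'.val, Or.inl ⟨a', ha', rfl⟩, ?_⟩
        calc G.edist a'.val b'.val = G.edist (H.hom a') (H.hom b') := rfl
          _ ≤ H.coe.edist a' b' := edist_map_le H.hom a' b'
          _ ≤ 2 := hd
      · simp only [if_neg hjz] at hb; exact absurd hb (Set.notMem_empty b)
  exact le_csSup (bddAbove_trd2_set G) hmem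
end

section
/- For a connected finite simple graph G, Tr_{d₂}(G) = 3 if and only if G is isomorphic to one of P₃ (the path on 3 vertices), K₃ (the triangle), or P₄ (the path on 4 vertices). -/
open SimpleGraph

/-!
A d₂-transitive partition has at most `|V|` parts, and `|V|` parts are possible only when `G` has
diameter at most 2, all parts being singletons. Conversely, singleton parts `{a}, {b}, {c}` after
one part holding all other vertices form a d₂-transitive partition as soon as `a, b, c` are
pairwise within distance 2 and each is within distance 2 of some other vertex.

Hence `Tr_{d₂}(G) = 3` forces `3 ≤ |V| ≤ 4`: with five or more vertices either the diameter is at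
most 2, or there is a geodesic `x b c d` and a vertex off it adjacent to it, which is within
distance 2 of `x` or of `d`; either way three consecutive vertices of the geodesic can be made
singletons. A connected graph on three vertices is `P₃` or `K₃`, of diameter at most 2. On four
vertices `Tr_{d₂}(G) = 3` forces diameter 3, and a geodesic through all four vertices is an induced
`P₄`; conversely `P₄` has the partition `{0, 3}, {1}, {2}` and diameter 3.
-/

namespace SimpleGraph

variable {V W : Type*} {G : SimpleGraph V} {H : SimpleGraph W} {u v w : V}

lemma Adj.edist_le_two (h : G.Adj u v) : G.edist u v ≤ 2 :=
  (edist_le (.cons h .nil)).trans (by simp)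

lemma edist_le_two_of_adj_of_adj (h₁ : G.Adj u w) (h₂ : G.Adj w v) : G.edist u v ≤ 2 :=
  (edist_le (.cons h₁ (.cons h₂ .nil))).trans (by simp)

lemma Hom.edist_map_le (f : G →g H) (u v : V) : H.edist (f u) (f v) ≤ G.edist u v := by
  rcases eq_or_ne (G.edist u v) ⊤ with h | h
  · simp [h]
  obtain ⟨p, hp⟩ := exists_walk_of_edist_ne_top h
  simpa [hp] using edist_le (p.map f)

lemma Iso.edist_map (e : G ≃g H) (u v : V) : H.edist (e u) (e v) = G.edist u v :=
  le_antisymm (e.toHom.edist_map_le u v) <| by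
    simpa using e.symm.toHom.edist_map_le (e u) (e v)

lemma Connected.dist_lt_card [Fintype V] (hG : G.Connected) (u v : V) :
    G.dist u v < Fintype.card V := by
  obtain ⟨p, hp, hlen⟩ := hG.exists_path_of_dist u v
  exact hlen ▸ hp.length_lt

lemma Walk.dist_getVert_of_length_eq_dist {p : G.Walk u v} (hp : p.length = G.dist u v)
    {i : ℕ} (hi : i ≤ p.length) : G.dist u (p.getVert i) = i := by
  rw [← length_eq_dist_of_subwalk hp (p.isSubwalk_take i), Walk.take_length]
  omega

lemma exists_adj_adj_adj_of_three_le_dist {x y : V} (h : 3 ≤ G.dist x y) :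
    ∃ b c d, G.Adj x b ∧ G.Adj b c ∧ G.Adj c d ∧
      G.dist x b = 1 ∧ G.dist x c = 2 ∧ G.dist x d = 3 := by
  obtain ⟨p, hp⟩ :=
    (Reachable.of_dist_ne_zero (by omega : G.dist x y ≠ 0)).exists_walk_length_eq_dist
  have hdist i (hi : i ≤ 3) := p.dist_getVert_of_length_eq_dist hp (i := i) (by omega)
  refine ⟨p.getVert 1, p.getVert 2, p.getVert 3, ?_, p.adj_getVert_succ (by omega),
    p.adj_getVert_succ (by omega), hdist 1 (by omega), hdist 2 (by omega), hdist 3 le_rfl⟩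
  simpa using p.adj_getVert_succ (i := 0) (by omega)

lemma Connected.exists_three_le_dist_of_not_forall_edist_le_two (hG : G.Connected)
    (h : ¬ ∀ u v, G.edist u v ≤ 2) : ∃ u v, 3 ≤ G.dist u v := by
  simp only [not_forall, not_le] at h
  obtain ⟨u, v, huv⟩ := h
  rw [← (hG u v).coe_dist_eq_edist] at huv
  exact ⟨u, v, by exact_mod_cast Order.add_one_le_of_lt huv⟩

end SimpleGraph

section Partition

variable {V W : Type*} {G : SimpleGraph V} {H : SimpleGraph W} {k : ℕ} {P : Fin k → Set V}

namespace IsD2TransPartition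

lemma exists_injective_mem (hP : IsD2TransPartition G P) :
    ∃ f : Fin k → V, Function.Injective f ∧ ∀ i, f i ∈ P i := by
  choose f hf using hP.1
  exact ⟨f, fun i j hij => (hP.2.1 (f i)).unique (hf i) (hij ▸ hf j), hf⟩

lemma card_le [Fintype V] (hP : IsD2TransPartition G P) : k ≤ Fintype.card V := by
  obtain ⟨f, hf, -⟩ := hP.exists_injective_mem
  simpa using Fintype.card_le_of_injective f hf

lemma edist_le_two_of_card_eq [Fintype V] (hP : IsD2TransPartition G P)
    (hk : k = Fintype.card V) (u v : V) : G.edist u v ≤ 2 := by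
  obtain ⟨f, hf, hfP⟩ := hP.exists_injective_mem
  have hbij : Function.Bijective f :=
    (Fintype.bijective_iff_injective_and_card f).mpr ⟨hf, by simp [hk]⟩
  have hsingle : ∀ i, ∀ x ∈ P i, x = f i := by
    intro i x hx
    obtain ⟨j, rfl⟩ := hbij.2 x
    rw [(hP.2.1 (f j)).unique (hfP j) hx]
  obtain ⟨i, hu, -⟩ := hP.2.1 u
  obtain ⟨j, hv, -⟩ := hP.2.1 v
  rcases lt_trichotomy i j with hij | rfl | hij
  · obtain ⟨a, ha, hav⟩ := hP.2.2 i j hij v hv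
    rwa [hsingle i a ha, ← hsingle i u hu] at hav
  · simp [hsingle i u hu, hsingle i v hv]
  · obtain ⟨a, ha, hau⟩ := hP.2.2 j i hij u hu
    rwa [hsingle j a ha, ← hsingle j v hv, edist_comm] at hau

lemma map_iso (hP : IsD2TransPartition G P) (e : G ≃g H) :
    IsD2TransPartition H fun i => e.symm ⁻¹' P i := by
  refine ⟨fun i => ?_, fun w => hP.2.1 (e.symm w), fun i j hij b hb => ?_⟩
  · obtain ⟨x, hx⟩ := hP.1 i
    exact ⟨e x, by simpa using hx⟩
  · obtain ⟨a, ha, hab⟩ := hP.2.2 i j hij _ hb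
    refine ⟨e a, by simpa using ha, ?_⟩
    rwa [← e.apply_symm_apply b, e.edist_map]

end IsD2TransPartition

lemma exists_isD2TransPartition_of_injective {m : ℕ} {f : Fin (m + 1) → V}
    (hf : Function.Injective f) (hnear : ∀ i j, i < j → G.edist (f i) (f j) ≤ 2)
    (hwit : ∀ i, ∃ w ∉ Set.range f, G.edist w (f i) ≤ 2) :
    ∃ P : Fin (m + 2) → Set V, IsD2TransPartition G P := by
  refine ⟨Fin.cases (Set.range f)ᶜ fun i => {f i}, ?_, fun v => ?_, ?_⟩
  · intro i
    cases i using Fin.cases with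
    | zero => obtain ⟨w, hw, -⟩ := hwit 0; exact ⟨w, hw⟩
    | succ i => exact ⟨f i, rfl⟩
  · by_cases hv : v ∈ Set.range f
    · obtain ⟨j, rfl⟩ := hv
      refine ⟨j.succ, rfl, fun i hi => ?_⟩
      cases i using Fin.cases with
      | zero => exact absurd ⟨j, rfl⟩ hi
      | succ i => exact congrArg Fin.succ (hf hi).symm
    · refine ⟨0, hv, fun i hi => ?_⟩
      cases i using Fin.cases with
      | zero => rfl
      | succ i => exact absurd ⟨i, hi.symm⟩ hv
  · intro i j hij b hb
    cases j using Fin.cases with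
    | zero => exact absurd hij (Fin.not_lt_zero i)
    | succ j =>
      obtain rfl : b = f j := hb
      cases i using Fin.cases with
      | zero => exact hwit j
      | succ i => exact ⟨f i, rfl, hnear i j (Fin.succ_lt_succ_iff.mp hij)⟩

lemma exists_isD2TransPartition_four_of_adj_adj_adj {a b c d w : V} (hab : G.Adj a b)
    (hbc : G.Adj b c) (hcd : G.Adj c d) (hac : a ≠ c) (hda : d ≠ a) (hdb : d ≠ b)
    (hwa : w ≠ a) (hwb : w ≠ b) (hwc : w ≠ c) (hw : G.edist w a ≤ 2) :
    ∃ P : Fin 4 → Set V, IsD2TransPartition G P := by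
  refine exists_isD2TransPartition_of_injective (f := ![a, b, c]) ?_ ?_ ?_
  · intro i j
    fin_cases i <;> fin_cases j <;> simp [hab.ne, hac, hbc.ne, hab.ne.symm, hac.symm, hbc.ne.symm]
  · intro i j hij
    fin_cases i <;> fin_cases j <;> simp at hij ⊢
    exacts [hab.edist_le_two, edist_le_two_of_adj_of_adj hab hbc, hbc.edist_le_two]
  · intro i
    fin_cases i
    exacts [⟨w, by simp [hwa, hwb, hwc], hw⟩,
      ⟨d, by simp [hda, hdb, hcd.ne.symm], edist_le_two_of_adj_of_adj hcd.symm hbc.symm⟩,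
      ⟨d, by simp [hda, hdb, hcd.ne.symm], hcd.symm.edist_le_two⟩]

lemma exists_isD2TransPartition_of_forall_edist_le_two [Fintype V] {m : ℕ}
    (h : ∀ u v, G.edist u v ≤ 2) (hm : m + 2 ≤ Fintype.card V) :
    ∃ P : Fin (m + 2) → Set V, IsD2TransPartition G P := by
  obtain ⟨e⟩ := Function.Embedding.nonempty_of_card_le (α := Fin (m + 2)) (by simpa using hm)
  refine exists_isD2TransPartition_of_injective (f := e ∘ Fin.castSucc)
    (e.injective.comp (Fin.castSucc_injective _)) (fun _ _ _ => h _ _)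
    fun _ => ⟨e (Fin.last _), ?_, h _ _⟩
  rintro ⟨i, hi⟩
  exact Fin.castSucc_ne_last i (e.injective hi)

lemma bddAbove_setOf_isD2TransPartition [Fintype V] :
    BddAbove {k : ℕ | ∃ P : Fin k → Set V, IsD2TransPartition G P} :=
  ⟨Fintype.card V, fun _ ⟨_, hP⟩ => hP.card_le⟩

lemma le_trd2 [Fintype V] (hP : IsD2TransPartition G P) : k ≤ Trd2 G :=
  le_csSup bddAbove_setOf_isD2TransPartition ⟨P, hP⟩

lemma trd2_eq_of_isD2TransPartition (hP : IsD2TransPartition G P)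
    (hmax : ∀ m (Q : Fin m → Set V), IsD2TransPartition G Q → m ≤ k) : Trd2 G = k :=
  le_antisymm (csSup_le ⟨k, P, hP⟩ fun m ⟨Q, hQ⟩ => hmax m Q hQ)
    (le_csSup ⟨k, fun m ⟨Q, hQ⟩ => hmax m Q hQ⟩ ⟨P, hP⟩)

lemma exists_isD2TransPartition_of_trd2_eq [Fintype V] (h : Trd2 G = k) (hk : k ≠ 0) :
    ∃ P : Fin k → Set V, IsD2TransPartition G P :=
  h ▸ Nat.sSup_mem (Set.nonempty_iff_ne_empty.mpr fun he => hk (by simp [← h, Trd2, he]))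
    bddAbove_setOf_isD2TransPartition

lemma trd2_congr (e : G ≃g H) : Trd2 G = Trd2 H := by
  unfold Trd2
  congr 1
  ext k
  exact ⟨fun ⟨P, hP⟩ => ⟨_, hP.map_iso e⟩, fun ⟨Q, hQ⟩ => ⟨_, hQ.map_iso e.symm⟩⟩

end Partition

namespace SimpleGraph

variable {V : Type*} [Fintype V] {G : SimpleGraph V}

/-- A geodesic through all the vertices has no chords: adjacent vertices have distances from
its start differing by at most one. -/
lemma nonempty_iso_pathGraph_of_dist_add_one_eq_card {u v : V} (hr : G.Reachable u v)
    (h : G.dist u v + 1 = Fintype.card V) : Nonempty (G ≃g pathGraph (Fintype.card V)) := by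
  obtain ⟨p, hp⟩ := hr.exists_walk_length_eq_dist
  have hdist (i : Fin (Fintype.card V)) : G.dist u (p.getVert i) = i :=
    p.dist_getVert_of_length_eq_dist hp (by omega)
  have hinj : Function.Injective fun i : Fin (Fintype.card V) => p.getVert i :=
    fun i j hij => Fin.ext (by simpa [hdist] using congrArg (G.dist u) hij)
  have hbij := (Fintype.bijective_iff_injective_and_card _).mpr ⟨hinj, Fintype.card_fin _⟩
  refine ⟨(RelIso.mk (Equiv.ofBijective _ hbij) fun {i j} => ?_).symm⟩
  simp only [Equiv.ofBijective_apply, pathGraph_adj]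
  constructor
  · intro hadj
    have hne : (i : ℕ) ≠ j := fun hij => hadj.ne (by rw [Fin.ext hij])
    have := hadj.diff_dist_adj (u := u)
    rw [hdist, hdist] at this
    omega
  · rintro (hij | hij)
    · simpa [hij] using p.adj_getVert_succ (i := i) (by omega)
    · simpa [hij] using (p.adj_getVert_succ (i := j) (by omega)).symm

lemma Connected.nonempty_iso_pathGraph_three_or_top (hG : G.Connected)
    (h3 : Fintype.card V = 3) :
    Nonempty (G ≃g pathGraph 3) ∨ Nonempty (G ≃g (⊤ : SimpleGraph (Fin 3))) := by
  by_cases htop : G = ⊤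
  · subst htop
    exact Or.inr ⟨Iso.completeGraph (Fintype.equivFinOfCardEq h3)⟩
  obtain ⟨u, v, huv, hnadj⟩ : ∃ u v, u ≠ v ∧ ¬ G.Adj u v := by
    by_contra! hadj
    exact htop (eq_top_iff.mpr fun u v huv => hadj u v huv)
  have hlt := hG.dist_lt_card u v
  have hgt := hG.one_lt_dist_of_ne_of_not_adj huv hnadj
  rw [← h3]
  exact Or.inl (nonempty_iso_pathGraph_of_dist_add_one_eq_card (hG u v) (by omega))

lemma Connected.nonempty_iso_pathGraph_four (hG : G.Connected) (h4 : Fintype.card V = 4)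
    (hno : ¬ ∃ P : Fin 4 → Set V, IsD2TransPartition G P) : Nonempty (G ≃g pathGraph 4) := by
  obtain ⟨u, v, huv⟩ := hG.exists_three_le_dist_of_not_forall_edist_le_two fun h =>
    hno (exists_isD2TransPartition_of_forall_edist_le_two h h4.ge)
  have hlt := hG.dist_lt_card u v
  rw [← h4]
  exact nonempty_iso_pathGraph_of_dist_add_one_eq_card (hG u v) (by omega)

lemma Connected.exists_isD2TransPartition_four_of_five_le_card (hG : G.Connected)
    (h5 : 5 ≤ Fintype.card V) : ∃ P : Fin 4 → Set V, IsD2TransPartition G P := by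
  classical
  by_cases hdiam : ∀ u v, G.edist u v ≤ 2
  · exact exists_isD2TransPartition_of_forall_edist_le_two hdiam (by omega)
  obtain ⟨x, y, hxy⟩ := hG.exists_three_le_dist_of_not_forall_edist_le_two hdiam
  obtain ⟨b, c, d, hxb, hbc, hcd, hb, hc, hd⟩ := exists_adj_adj_adj_of_three_le_dist hxy
  have hne {p q : V} (h : G.dist x p ≠ G.dist x q) : p ≠ q := fun hpq => h (hpq ▸ rfl)
  have hxc : x ≠ c := hne (by simp [hc])
  have hxd : x ≠ d := hne (by simp [hd])
  have hbd : b ≠ d := hne (by simp [hb, hd])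
  obtain ⟨z, -, hz⟩ := Finset.exists_mem_notMem_of_card_lt_card
    (s := {x, b, c, d}) (t := Finset.univ) ((Finset.card_le_four).trans_lt (by simp; omega))
  obtain ⟨⟨⟨s, w⟩, hsw⟩, -, hs, hw⟩ :=
    (hG x z).some.exists_boundary_dart (↑({x, b, c, d} : Finset V)) (by simp) (by simpa using hz)
  simp only [Finset.coe_insert, Finset.coe_singleton, Set.mem_insert_iff,
    Set.mem_singleton_iff, not_or] at hs hw
  obtain ⟨hwx, hwb, hwc, hwd⟩ := hw
  have hwxd : G.edist w x ≤ 2 ∨ G.edist w d ≤ 2 := by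
    rcases hs with rfl | rfl | rfl | rfl
    · exact Or.inl hsw.symm.edist_le_two
    · exact Or.inl (edist_le_two_of_adj_of_adj hsw.symm hxb.symm)
    · exact Or.inr (edist_le_two_of_adj_of_adj hsw.symm hcd)
    · exact Or.inr hsw.symm.edist_le_two
  rcases hwxd with hwx' | hwd'
  · exact exists_isD2TransPartition_four_of_adj_adj_adj hxb hbc hcd hxc hxd.symm hbd.symm
      hwx hwb hwc hwx'
  · exact exists_isD2TransPartition_four_of_adj_adj_adj hcd.symm hbc.symm hxb.symm hbd.symm hxd
      hxc hwd hwc hwb hwd'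

lemma Connected.trd2_eq_three_of_card_eq_three (hG : G.Connected) (h3 : Fintype.card V = 3) :
    Trd2 G = 3 := by
  have hdiam (u v : V) : G.edist u v ≤ 2 := by
    have := hG.dist_lt_card u v
    rw [← (hG u v).coe_dist_eq_edist]
    exact_mod_cast (by omega : G.dist u v ≤ 2)
  obtain ⟨P, hP⟩ := exists_isD2TransPartition_of_forall_edist_le_two (m := 1) hdiam h3.ge
  exact trd2_eq_of_isD2TransPartition hP fun m Q hQ => h3 ▸ hQ.card_le

end SimpleGraph

lemma trd2_pathGraph_four : Trd2 (pathGraph 4) = 3 := by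
  obtain ⟨P, hP⟩ : ∃ P : Fin 3 → Set (Fin 4), IsD2TransPartition (pathGraph 4) P := by
    refine exists_isD2TransPartition_of_injective (f := ![1, 2]) (by decide) ?_ ?_
    · intro i j hij
      fin_cases i <;> fin_cases j <;> simp at hij
      exact Adj.edist_le_two (by simp [pathGraph_adj])
    · intro i
      fin_cases i
      exacts [⟨0, by simp, Adj.edist_le_two (by simp [pathGraph_adj])⟩,
        ⟨3, by simp, Adj.edist_le_two (by simp [pathGraph_adj])⟩]
  refine trd2_eq_of_isD2TransPartition hP fun m Q hQ => ?_
  have hfar : ¬ (pathGraph 4).edist 0 3 ≤ 2 := by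
    rw [not_le, two_lt_edist_iff, Set.eq_empty_iff_forall_notMem]
    simp only [mem_commonNeighbors, pathGraph_adj]
    decide
  have hm := hQ.card_le
  simp only [Fintype.card_fin] at hm
  by_contra
  exact hfar (hQ.edist_le_two_of_card_eq (by simp; omega) 0 3)

theorem stmt_7 {V : Type*} [Fintype V] (G : SimpleGraph V) (hG : G.Connected) :
    Trd2 G = 3 ↔
      (Nonempty (G ≃g pathGraph 3) ∨ Nonempty (G ≃g (⊤ : SimpleGraph (Fin 3))) ∨
        Nonempty (G ≃g pathGraph 4)) := by
  constructor
  · intro h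
    obtain ⟨P, hP⟩ := exists_isD2TransPartition_of_trd2_eq h three_ne_zero
    have hno4 : ¬ ∃ Q : Fin 4 → Set V, IsD2TransPartition G Q := fun ⟨Q, hQ⟩ => by
      have := le_trd2 hQ
      omega
    have h3 := hP.card_le
    have h4 : Fintype.card V ≤ 4 := by
      by_contra! h5
      exact hno4 (hG.exists_isD2TransPartition_four_of_five_le_card h5)
    interval_cases hcard : Fintype.card V
    · exact (hG.nonempty_iso_pathGraph_three_or_top hcard).imp_right Or.inl
    · exact Or.inr (Or.inr (hG.nonempty_iso_pathGraph_four hcard hno4))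
  · rintro (⟨⟨e⟩⟩ | ⟨⟨e⟩⟩ | ⟨⟨e⟩⟩)
    · exact hG.trd2_eq_three_of_card_eq_three (by simp [Fintype.card_congr e.toEquiv])
    · exact hG.trd2_eq_three_of_card_eq_three (by simp [Fintype.card_congr e.toEquiv])
    · rw [trd2_congr e, trd2_pathGraph_four]
end

section
/- For the path Pₙ on n vertices with n ≥ 7, the d₂-transitivity is exactly 5, i.e., Tr_{d₂}(Pₙ) = 5. -/
open SimpleGraph

/-! The parts of a d₂-transitive partition are disjoint, so a vertex of the last part has a
distinct representative of every part within distance 2 of it; in a path such a closed ball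
has at most 5 vertices. Conversely, colouring the vertices `0, 1, 2, …` of the path by
`1, 0, 2, 3, 4, 1, 0, 0, …` gives a d₂-transitive partition into 5 parts. -/

section Path

variable {n : ℕ}

theorem pathGraph_walk_length_ge {a b : Fin n} (w : (pathGraph n).Walk a b) :
    a.val ≤ b.val + w.length ∧ b.val ≤ a.val + w.length := by
  induction w with
  | nil => simp
  | cons h w ih =>
    rw [pathGraph_adj] at h
    rw [Walk.length_cons]
    omega

theorem pathGraph_edist_le_of_val_add_eq {a b : Fin n} {d : ℕ} (h : a.val + d = b.val) :
    (pathGraph n).edist a b ≤ d := by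
  induction d generalizing b with
  | zero => simp [Fin.ext (by simpa using h)]
  | succ d ih =>
    let c : Fin n := ⟨a.val + d, by omega⟩
    have hcb : (pathGraph n).Adj c b := pathGraph_adj.mpr (Or.inl (by simp [c]; omega))
    calc (pathGraph n).edist a b ≤ (pathGraph n).edist a c + (pathGraph n).edist c b :=
          SimpleGraph.edist_triangle
      _ ≤ d + 1 := add_le_add (ih rfl) (edist_eq_one_iff_adj.mpr hcb).le
      _ = (d + 1 : ℕ) := by push_cast; rfl

theorem pathGraph_edist_le_iff {a b : Fin n} {d : ℕ} :
    (pathGraph n).edist a b ≤ d ↔ a.val ≤ b.val + d ∧ b.val ≤ a.val + d := by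
  refine ⟨fun h => ?_, fun ⟨hab, hba⟩ => ?_⟩
  · obtain ⟨w, hw⟩ := exists_walk_of_edist_ne_top (ne_top_of_le_ne_top (by simp) h)
    have hlen : w.length ≤ d := by exact_mod_cast hw.le.trans h
    have := pathGraph_walk_length_ge w
    omega
  · rcases le_total a.val b.val with h | h
    · exact (pathGraph_edist_le_of_val_add_eq (Nat.add_sub_of_le h)).trans (by gcongr; omega)
    · rw [edist_comm]
      exact (pathGraph_edist_le_of_val_add_eq (Nat.add_sub_of_le h)).trans (by gcongr; omega)

end Path

namespace IsD2TransPartition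

variable {V : Type*} {G : SimpleGraph V} {k : ℕ} {P : Fin k → Set V}

theorem eq_of_mem (hP : IsD2TransPartition G P) {a : V} {i j : Fin k} (hi : a ∈ P i)
    (hj : a ∈ P j) : i = j :=
  (hP.2.1 a).unique hi hj

theorem card_le_of_encard_ball_le (hP : IsD2TransPartition G P) {m : ℕ}
    (hball : ∀ b, {a | G.edist a b ≤ 2}.encard ≤ m) : k ≤ m := by
  obtain _ | k := k
  · exact Nat.zero_le m
  obtain ⟨b, hb⟩ := hP.1 (Fin.last k)
  have hrep : ∀ i, ∃ a ∈ P i, G.edist a b ≤ 2 := by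
    intro i
    rcases (Fin.le_last i).lt_or_eq with hi | rfl
    · exact hP.2.2 i _ hi b hb
    · exact ⟨b, hb, by simp⟩
  choose f hfP hfb using hrep
  have hf : Function.Injective f := fun i j h => hP.eq_of_mem (hfP i) (h ▸ hfP j)
  have : ((k + 1 : ℕ) : ℕ∞) ≤ m := calc
    ((k + 1 : ℕ) : ℕ∞) = (Set.univ : Set (Fin (k + 1))).encard := by simp
    _ ≤ {a | G.edist a b ≤ 2}.encard :=
      Set.encard_le_encard_of_injOn (fun i _ => hfb i) hf.injOn
    _ ≤ m := hball b
  exact_mod_cast this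

end IsD2TransPartition

theorem isD2TransPartition_fiber {V : Type*} {G : SimpleGraph V} {k : ℕ} {c : V → Fin k}
    (hc : Function.Surjective c) (hnear : ∀ b, ∀ i < c b, ∃ a, c a = i ∧ G.edist a b ≤ 2) :
    IsD2TransPartition G (fun i => c ⁻¹' {i}) := by
  refine ⟨fun i => hc i, fun v => ⟨c v, rfl, fun i hi => hi.symm⟩, ?_⟩
  rintro i j hij b rfl
  exact hnear b i hij

theorem pathGraph_encard_ball_le_five {n : ℕ} (b : Fin n) :
    {a | (pathGraph n).edist a b ≤ 2}.encard ≤ 5 := by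
  have hmaps : Set.MapsTo Fin.val {a | (pathGraph n).edist a b ≤ 2}
      (Set.Icc (b.val - 2) (b.val + 2)) := by
    intro a ha
    have := (pathGraph_edist_le_iff (d := 2)).mp ha
    simp only [Set.mem_Icc]
    omega
  calc {a | (pathGraph n).edist a b ≤ 2}.encard
      ≤ (Set.Icc (b.val - 2) (b.val + 2)).encard :=
        Set.encard_le_encard_of_injOn hmaps Fin.val_injective.injOn
    _ ≤ 5 := by
      rw [Set.encard_eq_coe_toFinset_card, Set.toFinset_Icc, Nat.card_Icc]
      norm_cast
      omega

/-- Vertex `4` is the whole part `4`, and the only vertex of part `0` within distance 2 of it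
is `6`: this is where `7 ≤ n` comes from. -/
def d2Pattern : ℕ → Fin 5
  | 0 => 1
  | 1 => 0
  | 2 => 2
  | 3 => 3
  | 4 => 4
  | 5 => 1
  | _ => 0

theorem d2Pattern_eq_zero {x : ℕ} (hx : 6 ≤ x) : d2Pattern x = 0 := by
  match x, hx with
  | _ + 6, _ => rfl

theorem d2Pattern_near : ∀ b : Fin 6, ∀ i < d2Pattern b,
    ∃ a : Fin 7, d2Pattern a = i ∧ a.val ≤ b + 2 ∧ b.val ≤ a + 2 := by
  decide

theorem exists_isD2TransPartition_pathGraph {n : ℕ} (hn : 7 ≤ n) :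
    ∃ P : Fin 5 → Set (Fin n), IsD2TransPartition (pathGraph n) P := by
  let c : Fin n → Fin 5 := fun v => d2Pattern v
  refine ⟨_, isD2TransPartition_fiber (c := c) ?_ ?_⟩
  · intro i
    fin_cases i
    exacts [⟨⟨1, by omega⟩, rfl⟩, ⟨⟨0, by omega⟩, rfl⟩, ⟨⟨2, by omega⟩, rfl⟩,
      ⟨⟨3, by omega⟩, rfl⟩, ⟨⟨4, by omega⟩, rfl⟩]
  · intro b i hi
    have hb : b.val < 6 := by
      by_contra! hb
      simp [c, d2Pattern_eq_zero hb] at hi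
    obtain ⟨a, rfl, hab, hba⟩ := d2Pattern_near ⟨b, hb⟩ i hi
    exact ⟨⟨a, by omega⟩, rfl, pathGraph_edist_le_iff.mpr ⟨hab, hba⟩⟩

theorem stmt_10 (n : ℕ) (hn : 7 ≤ n) : Trd2 (pathGraph n) = 5 := by
  refine IsGreatest.csSup_eq ⟨exists_isD2TransPartition_pathGraph hn, ?_⟩
  rintro k ⟨P, hP⟩
  exact hP.card_le_of_encard_ball_le pathGraph_encard_ball_le_five
end

section
/- Let G be the complement of a bipartite graph Ḡ = (X ∪ Y, Ē) with |X| = n and |Y| = m. Let X' = {x ∈ X : deg_Ḡ(x) = m} and Y' = {y ∈ Y : deg_Ḡ(y) = n}. If the bipartite graph Ḡ[X' ∪ Y'] has a maximum matching of size t, then Tr_{d₂}(G) = n + m − t. -/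
open SimpleGraph

/-- `M` is a matching in `H` between `X'` and `Y'`: each pair is an `X'`–`Y'`
edge of `H` and no two pairs share an endpoint. -/
def IsBipMatching {V : Type*} (H : SimpleGraph V) (X' Y' : Set V)
    (M : Finset (V × V)) : Prop :=
  (∀ p ∈ M, p.1 ∈ X' ∧ p.2 ∈ Y' ∧ H.Adj p.1 p.2) ∧
  (∀ p ∈ M, ∀ q ∈ M, p ≠ q → p.1 ≠ q.1 ∧ p.2 ≠ q.2)

/-! Inside `X`, and inside `Y`, any two vertices are adjacent in `G`, and a vertex of `X` and a
vertex of `Y` are within distance 2 unless they lie in `X'` and `Y'`, where they have no common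
neighbour. So a d₂-transitive partition cannot have one part inside `X'` and another inside `Y'`;
choosing in every part a vertex outside `X'` (or outside `Y'`) gives
`k ≤ n + m - min |X'| |Y'| ≤ n + m - t`. Conversely, the edges of a maximum matching of
`Ḡ[X' ∪ Y']` as two-element parts, followed by the unmatched vertices as singletons, form a
d₂-transitive partition of size `n + m - t`: by maximality no two unmatched vertices form an
`X'`–`Y'` pair. -/

namespace SimpleGraph

variable {V : Type*} {G H : SimpleGraph V} {X Y : Set V} {a b : V}

def fullVertices (H : SimpleGraph V) (X Y : Set V) : Set V :=
  {x ∈ X | ∀ y ∈ Y, H.Adj x y}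

theorem IsBipartiteWith.ncard_neighborSet_eq_iff [Finite V] (h : H.IsBipartiteWith X Y)
    (ha : a ∈ X) : (H.neighborSet a).ncard = Y.ncard ↔ ∀ y ∈ Y, H.Adj a y := by
  have hsub := isBipartiteWith_neighborSet_subset h ha
  refine ⟨fun hcard y hy => ?_, fun hall => ?_⟩
  · rw [← Set.eq_of_subset_of_ncard_le hsub hcard.ge] at hy
    exact hy
  · rw [hsub.antisymm hall]

theorem IsBipartiteWith.sep_ncard_neighborSet_eq [Finite V] (h : H.IsBipartiteWith X Y) :
    {x ∈ X | (H.neighborSet x).ncard = Y.ncard} = H.fullVertices X Y :=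
  Set.sep_ext_iff.mpr fun _ hx => h.ncard_neighborSet_eq_iff hx

theorem edist_le_one_of_isBipartiteWith_compl (h : Gᶜ.IsBipartiteWith X Y) (ha : a ∈ X)
    (hb : b ∈ X) : G.edist a b ≤ 1 := by
  rw [edist_le_one_iff_adj_or_eq, or_iff_not_imp_right]
  intro hab
  by_contra hnadj
  exact Set.disjoint_left.mp h.disjoint hb (h.mem_of_mem_adj ha ⟨hab, hnadj⟩)

theorem exists_adj_of_notMem_fullVertices (h : Gᶜ.IsBipartiteWith X Y) (ha : a ∈ X)
    (ha' : a ∉ Gᶜ.fullVertices X Y) : ∃ y ∈ Y, G.Adj a y := by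
  obtain ⟨y, hy, hnadj⟩ : ∃ y ∈ Y, ¬Gᶜ.Adj a y := by
    simpa [fullVertices, ha] using ha'
  have hay : a ≠ y := fun hay => Set.disjoint_left.mp h.disjoint ha (hay ▸ hy)
  exact ⟨y, hy, by simpa [hay] using hnadj⟩

theorem edist_le_two_of_notMem_fullVertices (h : Gᶜ.IsBipartiteWith X Y) (ha : a ∈ X)
    (ha' : a ∉ Gᶜ.fullVertices X Y) (hb : b ∈ Y) : G.edist a b ≤ 2 := by
  obtain ⟨y, hy, hadj⟩ := exists_adj_of_notMem_fullVertices h ha ha'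
  calc G.edist a b ≤ G.edist a y + G.edist y b := G.edist_triangle
    _ ≤ 1 + 1 := by
      gcongr
      · exact (edist_eq_one_iff_adj.mpr hadj).le
      · exact edist_le_one_of_isBipartiteWith_compl h.symm hy hb
    _ = 2 := one_add_one_eq_two

theorem edist_le_two_of_mem_left_of_mem_right (h : Gᶜ.IsBipartiteWith X Y) (ha : a ∈ X)
    (hb : b ∈ Y) (hab : ¬(a ∈ Gᶜ.fullVertices X Y ∧ b ∈ Gᶜ.fullVertices Y X)) :
    G.edist a b ≤ 2 := by
  by_cases ha' : a ∈ Gᶜ.fullVertices X Y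
  · rw [edist_comm]
    exact edist_le_two_of_notMem_fullVertices h.symm hb (fun hb' => hab ⟨ha', hb'⟩) ha
  · exact edist_le_two_of_notMem_fullVertices h ha ha' hb

theorem edist_le_two_of_isBipartiteWith_compl (h : Gᶜ.IsBipartiteWith X Y)
    (hcover : X ∪ Y = Set.univ)
    (hab : ¬(a ∈ Gᶜ.fullVertices X Y ∧ b ∈ Gᶜ.fullVertices Y X))
    (hba : ¬(b ∈ Gᶜ.fullVertices X Y ∧ a ∈ Gᶜ.fullVertices Y X)) :
    G.edist a b ≤ 2 := by
  have hmem : ∀ v, v ∈ X ∨ v ∈ Y := fun v => hcover.ge (Set.mem_univ v)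
  rcases hmem a with ha | ha <;> rcases hmem b with hb | hb
  · exact (edist_le_one_of_isBipartiteWith_compl h ha hb).trans one_le_two
  · exact edist_le_two_of_mem_left_of_mem_right h ha hb hab
  · rw [edist_comm]
    exact edist_le_two_of_mem_left_of_mem_right h hb ha hba
  · exact (edist_le_one_of_isBipartiteWith_compl h.symm ha hb).trans one_le_two

theorem two_lt_edist_of_mem_fullVertices (hcover : X ∪ Y = Set.univ)
    (ha : a ∈ Gᶜ.fullVertices X Y) (hb : b ∈ Gᶜ.fullVertices Y X) :
    2 < G.edist a b := by
  have hab : Gᶜ.Adj a b := ha.2 b hb.1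
  refine two_lt_edist_iff.mpr ⟨hab.ne, (compl_adj G a b).mp hab |>.2, ?_⟩
  ext c
  simp only [mem_commonNeighbors, Set.mem_empty_iff_false, iff_false, not_and]
  intro hac hcb
  rcases hcover.ge (Set.mem_univ c) with hc | hc
  · exact ((compl_adj G b c).mp (hb.2 c hc)).2 hcb
  · exact ((compl_adj G a c).mp (ha.2 c hc)).2 hac

end SimpleGraph

section Partition

variable {V ι : Type*} {G : SimpleGraph V} {k : ℕ}

theorem exists_isD2TransPartition_of_linearOrder [Fintype ι] [LinearOrder ι]
    (hk : Fintype.card ι = k) (P : ι → Set V) (hne : ∀ i, (P i).Nonempty)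
    (huniq : ∀ v, ∃! i, v ∈ P i)
    (htrans : ∀ i j, i < j → ∀ b ∈ P j, ∃ a ∈ P i, G.edist a b ≤ 2) :
    ∃ P' : Fin k → Set V, IsD2TransPartition G P' :=
  let e := Fintype.orderIsoFinOfCardEq ι hk
  ⟨P ∘ e, fun i => hne (e i), fun v => e.toEquiv.existsUnique_congr_right.mpr (huniq v),
    fun i j hij => htrans (e i) (e j) (e.lt_iff_lt.mpr hij)⟩

theorem natCard_add_ncard_le_of_forall_not_subset [Finite V] (P : ι → Set V)
    (huniq : ∀ v, ∃! i, v ∈ P i) {S : Set V} (hS : ∀ i, ¬P i ⊆ S) :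
    Nat.card ι + S.ncard ≤ Nat.card V := by
  choose g hgP hgS using fun i => Set.not_subset.mp (hS i)
  have hg : Function.Injective g := fun i j hij =>
    (huniq (g i)).unique (hgP i) (hij ▸ hgP j)
  calc Nat.card ι + S.ncard = (Set.range g).ncard + S.ncard := by
        rw [Set.ncard_range_of_injective hg]
    _ ≤ Sᶜ.ncard + S.ncard := by
        gcongr
        · exact Set.toFinite _
        · rintro _ ⟨i, rfl⟩
          exact hgS i
    _ = Nat.card V := by rw [add_comm, Set.ncard_add_ncard_compl]

theorem IsD2TransPartition.forall_not_subset_or {P : Fin k → Set V}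
    (hP : IsD2TransPartition G P) {A B : Set V} (hAB : Disjoint A B)
    (hfar : ∀ a ∈ A, ∀ b ∈ B, 2 < G.edist a b) :
    (∀ i, ¬P i ⊆ A) ∨ ∀ i, ¬P i ⊆ B := by
  by_contra! ⟨⟨i, hiA⟩, ⟨j, hjB⟩⟩
  obtain ⟨hne, -, htrans⟩ := hP
  rcases lt_trichotomy i j with hij | rfl | hji
  · obtain ⟨b, hb⟩ := hne j
    obtain ⟨a, ha, hd⟩ := htrans i j hij b hb
    exact (hfar a (hiA ha) b (hjB hb)).not_ge hd
  · obtain ⟨v, hv⟩ := hne i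
    exact Set.disjoint_left.mp hAB (hiA hv) (hjB hv)
  · obtain ⟨a, ha⟩ := hne i
    obtain ⟨b, hb, hd⟩ := htrans j i hji a ha
    exact (hfar a (hiA ha) b (hjB hb)).not_ge (G.edist_comm ▸ hd)

theorem IsD2TransPartition.card_add_min_ncard_le [Finite V] {P : Fin k → Set V}
    (hP : IsD2TransPartition G P) {A B : Set V} (hAB : Disjoint A B)
    (hfar : ∀ a ∈ A, ∀ b ∈ B, 2 < G.edist a b) :
    k + min A.ncard B.ncard ≤ Nat.card V := by
  rcases hP.forall_not_subset_or hAB hfar with hA | hB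
  · have := natCard_add_ncard_le_of_forall_not_subset P hP.2.1 hA
    rw [Nat.card_fin] at this
    omega
  · have := natCard_add_ncard_le_of_forall_not_subset P hP.2.1 hB
    rw [Nat.card_fin] at this
    omega

end Partition

section Matching

variable {V : Type*} {H : SimpleGraph V} {X Y X' Y' : Set V} {M : Finset (V × V)}

theorem IsBipMatching.mono (hM : IsBipMatching H X' Y' M) (hX : X' ⊆ X) (hY : Y' ⊆ Y) :
    IsBipMatching H X Y M :=
  ⟨fun p hp => ⟨hX (hM.1 p hp).1, hY (hM.1 p hp).2.1, (hM.1 p hp).2.2⟩, hM.2⟩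

theorem IsBipMatching.card_le_ncard_left [Finite V] (hM : IsBipMatching H X Y M) :
    M.card ≤ X.ncard := by
  rw [← Set.ncard_coe_finset]
  refine Set.ncard_le_ncard_of_injOn Prod.fst (fun p hp => (hM.1 p hp).1) ?_
  exact fun p hp q hq hpq => by_contra fun hne => (hM.2 p hp q hq hne).1 hpq

theorem IsBipMatching.card_le_ncard_right [Finite V] (hM : IsBipMatching H X Y M) :
    M.card ≤ Y.ncard := by
  rw [← Set.ncard_coe_finset]
  refine Set.ncard_le_ncard_of_injOn Prod.snd (fun p hp => (hM.1 p hp).2.1) ?_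
  exact fun p hp q hq hpq => by_contra fun hne => (hM.2 p hp q hq hne).2 hpq

theorem IsBipMatching.eq_of_mem_of_mem (hM : IsBipMatching H X Y M) (hXY : Disjoint X Y)
    {e e' : V × V} (he : e ∈ M) (he' : e' ∈ M) {v : V} (hv : v = e.1 ∨ v = e.2)
    (hv' : v = e'.1 ∨ v = e'.2) : e = e' := by
  by_contra hne
  obtain ⟨hfst, hsnd⟩ := hM.2 e he e' he' hne
  have hcross : ∀ p ∈ M, ∀ q ∈ M, p.1 ≠ q.2 := fun p hp q hq hpq =>
    Set.disjoint_left.mp hXY (hM.1 p hp).1 (hpq ▸ (hM.1 q hq).2.1)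
  rcases hv with rfl | rfl <;> rcases hv' with hv' | hv'
  · exact hfst hv'
  · exact hcross e he e' he' hv'
  · exact hcross e' he' e he hv'.symm
  · exact hsnd hv'

variable [DecidableEq V]

def matchedVertices (M : Finset (V × V)) : Finset V :=
  M.image Prod.fst ∪ M.image Prod.snd

theorem IsBipMatching.insert {a b : V} (hM : IsBipMatching H X Y M) (ha : a ∈ X) (hb : b ∈ Y)
    (hab : H.Adj a b) (ha' : a ∉ matchedVertices M) (hb' : b ∉ matchedVertices M) :
    IsBipMatching H X Y (insert (a, b) M) := by
  have hfresh : ∀ p ∈ M, a ≠ p.1 ∧ b ≠ p.2 := fun p hp =>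
    ⟨fun h => ha' (Finset.mem_union_left _ (Finset.mem_image.mpr ⟨p, hp, h.symm⟩)),
      fun h => hb' (Finset.mem_union_right _ (Finset.mem_image.mpr ⟨p, hp, h.symm⟩))⟩
  refine ⟨?_, ?_⟩
  · simp only [Finset.mem_insert, forall_eq_or_imp]
    exact ⟨⟨ha, hb, hab⟩, hM.1⟩
  · simp only [Finset.mem_insert, forall_eq_or_imp]
    refine ⟨⟨fun h => absurd rfl h, fun q hq _ => hfresh q hq⟩,
      fun p hp => ⟨?_, hM.2 p hp⟩⟩
    exact fun _ => ⟨(hfresh p hp).1.symm, (hfresh p hp).2.symm⟩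

theorem IsBipMatching.exists_card_lt {a b : V} (hM : IsBipMatching H X Y M) (ha : a ∈ X)
    (hb : b ∈ Y) (hab : H.Adj a b) (ha' : a ∉ matchedVertices M)
    (hb' : b ∉ matchedVertices M) : ∃ M', IsBipMatching H X Y M' ∧ M.card < M'.card := by
  refine ⟨_, hM.insert ha hb hab ha' hb', ?_⟩
  rw [Finset.card_insert_of_notMem fun hmem =>
    ha' (Finset.mem_union_left _ (Finset.mem_image_of_mem Prod.fst hmem))]
  exact Nat.lt_succ_self _

theorem IsBipMatching.card_matchedVertices (hM : IsBipMatching H X Y M) (hXY : Disjoint X Y) :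
    (matchedVertices M).card = 2 * M.card := by
  rw [matchedVertices, Finset.card_union_of_disjoint, Finset.card_image_of_injOn,
    Finset.card_image_of_injOn, two_mul]
  · exact fun p hp q hq hpq => by_contra fun hne => (hM.2 p hp q hq hne).2 hpq
  · exact fun p hp q hq hpq => by_contra fun hne => (hM.2 p hp q hq hne).1 hpq
  · simp only [Finset.disjoint_left, Finset.mem_image]
    rintro _ ⟨p, hp, rfl⟩ ⟨q, hq, hpq⟩
    exact Set.disjoint_left.mp hXY (hM.1 p hp).1 (hpq ▸ (hM.1 q hq).2.1)

theorem edist_le_two_of_notMem_matchedVertices {G : SimpleGraph V} {a b : V}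
    (h : Gᶜ.IsBipartiteWith X Y) (hcover : X ∪ Y = Set.univ)
    (hM : IsBipMatching Gᶜ (Gᶜ.fullVertices X Y) (Gᶜ.fullVertices Y X) M)
    (hmax : ∀ M', IsBipMatching Gᶜ (Gᶜ.fullVertices X Y) (Gᶜ.fullVertices Y X) M' →
      M'.card ≤ M.card)
    (ha : a ∉ matchedVertices M) (hb : b ∉ matchedVertices M) : G.edist a b ≤ 2 := by
  refine edist_le_two_of_isBipartiteWith_compl h hcover ?_ ?_ <;> rintro ⟨hx, hy⟩
  · obtain ⟨M', hM', hlt⟩ := hM.exists_card_lt hx hy (hx.2 b hy.1) ha hb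
    exact (hmax M' hM').not_gt hlt
  · obtain ⟨M', hM', hlt⟩ := hM.exists_card_lt hx hy (hx.2 a hy.1) hb ha
    exact (hmax M' hM').not_gt hlt

end Matching

section Construction

variable {V : Type*} [Fintype V] [DecidableEq V] {G H : SimpleGraph V} {X Y : Set V}
  {M : Finset (V × V)}

def matchingParts (M : Finset (V × V)) : M ⊕ ↥(matchedVertices M)ᶜ → Set V :=
  Sum.elim (fun e => {e.1.1, e.1.2}) (fun r => {r.1})

theorem IsBipMatching.existsUnique_mem_matchingParts (hM : IsBipMatching H X Y M)
    (hXY : Disjoint X Y) (v : V) : ∃! i, v ∈ matchingParts M i := by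
  by_cases hv : v ∈ matchedVertices M
  · obtain ⟨e, he, hve⟩ : ∃ e ∈ M, v = e.1 ∨ v = e.2 := by
      simp only [matchedVertices, Finset.mem_union, Finset.mem_image] at hv
      rcases hv with ⟨e, he, rfl⟩ | ⟨e, he, rfl⟩
      exacts [⟨e, he, .inl rfl⟩, ⟨e, he, .inr rfl⟩]
    refine ⟨.inl ⟨e, he⟩, hve, ?_⟩
    rintro (⟨e', he'⟩ | ⟨r, hr⟩) hvi
    · exact congrArg _ (Subtype.ext (hM.eq_of_mem_of_mem hXY he' he hvi hve))
    · exact absurd (hvi ▸ hr) (Finset.notMem_compl.mpr hv)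
  · refine ⟨.inr ⟨v, Finset.mem_compl.mpr hv⟩, rfl, ?_⟩
    rintro (⟨e, he⟩ | ⟨r, hr⟩) hvi
    · refine absurd ?_ hv
      rcases hvi with rfl | rfl
      exacts [Finset.mem_union_left _ (Finset.mem_image_of_mem _ he),
        Finset.mem_union_right _ (Finset.mem_image_of_mem _ he)]
    · exact congrArg _ (Subtype.ext hvi.symm)

theorem exists_isD2TransPartition_of_isBipMatching (h : Gᶜ.IsBipartiteWith X Y)
    (hcover : X ∪ Y = Set.univ) (hM : IsBipMatching Gᶜ X Y M)
    (hfree : ∀ a ∉ matchedVertices M, ∀ b ∉ matchedVertices M, G.edist a b ≤ 2) :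
    ∃ P : Fin (Fintype.card V - M.card) → Set V, IsD2TransPartition G P := by
  classical
  -- Within the pair parts and within the singletons the order is irrelevant.
  let : LinearOrder M := linearOrderOfSTO WellOrderingRel
  let : LinearOrder ↥(matchedVertices M)ᶜ := linearOrderOfSTO WellOrderingRel
  refine exists_isD2TransPartition_of_linearOrder (ι := M ⊕ₗ ↥(matchedVertices M)ᶜ) ?_
    (fun i => matchingParts M (ofLex i)) ?_ (hM.existsUnique_mem_matchingParts h.disjoint) ?_
  · have hle := (matchedVertices M).card_le_univ
    rw [hM.card_matchedVertices h.disjoint] at hle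
    rw [Fintype.card_lex, Fintype.card_sum, Fintype.card_coe, Fintype.card_coe,
      Finset.card_compl, hM.card_matchedVertices h.disjoint]
    omega
  · rintro (e | r)
    exacts [⟨_, Set.mem_insert _ _⟩, Set.singleton_nonempty _]
  · rintro (⟨e, he⟩ | ⟨r, hr⟩) j hij b hb
    · rcases hcover.ge (Set.mem_univ b) with hbX | hbY
      · refine ⟨e.1, Set.mem_insert _ _, ?_⟩
        exact (edist_le_one_of_isBipartiteWith_compl h (hM.1 e he).1 hbX).trans one_le_two
      · refine ⟨e.2, Set.mem_insert_of_mem _ rfl, ?_⟩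
        exact (edist_le_one_of_isBipartiteWith_compl h.symm (hM.1 e he).2.1 hbY).trans
          one_le_two
    · rcases j with e' | ⟨r', hr'⟩
      · exact absurd hij Sum.Lex.not_inr_lt_inl
      · exact ⟨r, rfl, hfree r (Finset.mem_compl.mp hr) b (hb ▸ Finset.mem_compl.mp hr')⟩

end Construction

theorem stmt_12 {V : Type*} [Fintype V] [DecidableEq V] (G : SimpleGraph V)
    (X Y : Set V) (hdisj : Disjoint X Y) (hcover : X ∪ Y = Set.univ)
    (hbip : ∀ a b : V, Gᶜ.Adj a b → ((a ∈ X ∧ b ∈ Y) ∨ (a ∈ Y ∧ b ∈ X)))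
    (n m t : ℕ) (hn : X.ncard = n) (hm : Y.ncard = m)
    (X' Y' : Set V)
    (hX' : X' = {x ∈ X | {y : V | Gᶜ.Adj x y}.ncard = m})
    (hY' : Y' = {y ∈ Y | {x : V | Gᶜ.Adj y x}.ncard = n})
    (hmatch : ∃ M : Finset (V × V), IsBipMatching Gᶜ X' Y' M ∧ M.card = t ∧
      ∀ M' : Finset (V × V), IsBipMatching Gᶜ X' Y' M' → M'.card ≤ t) :
    Trd2 G = n + m - t := by
  obtain ⟨M, hM, rfl, hmax⟩ := hmatch
  have h : Gᶜ.IsBipartiteWith X Y := ⟨hdisj, fun a b => hbip a b⟩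
  obtain rfl : X' = Gᶜ.fullVertices X Y := hX'.trans (hm ▸ h.sep_ncard_neighborSet_eq)
  obtain rfl : Y' = Gᶜ.fullVertices Y X := hY'.trans (hn ▸ h.symm.sep_ncard_neighborSet_eq)
  have hcard : Fintype.card V = n + m := by
    rw [← Nat.card_eq_fintype_card, ← Set.ncard_univ, ← hcover, Set.ncard_union_eq hdisj,
      hn, hm]
  refine IsGreatest.csSup_eq ⟨?_, ?_⟩
  · have hsub := hM.mono (Set.sep_subset X _) (Set.sep_subset Y _)
    exact hcard ▸ exists_isD2TransPartition_of_isBipMatching h hcover hsub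
      fun a ha b hb => edist_le_two_of_notMem_matchedVertices h hcover hM hmax ha hb
  · rintro k ⟨P, hP⟩
    have hk := hP.card_add_min_ncard_le (A := Gᶜ.fullVertices X Y) (B := Gᶜ.fullVertices Y X)
      (h.disjoint.mono (Set.sep_subset X _) (Set.sep_subset Y _))
      fun a ha b hb => two_lt_edist_of_mem_fullVertices hcover ha hb
    rw [Nat.card_eq_fintype_card, hcard] at hk
    have hleft := hM.card_le_ncard_left
    have hright := hM.card_le_ncard_right
    omega
end

section
/- If G is a connected bipartite chain graph, then the square G² is the complement of a bipartite chain graph. More precisely, in G² each side X and Y of the bipartition of G becomes a clique, the edges between X and Y in G² are exactly those of G, and the bipartite complement H (with same parts X, Y, and edges xy for x∈X, y∈Y nonadjacent in G) admits a chain ordering. -/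
open SimpleGraph

/-- The square of `G`: `x`, `y` adjacent iff `1 ≤ d_G(x,y) ≤ 2`. -/
def SimpleGraph.square {V : Type*} (G : SimpleGraph V) : SimpleGraph V where
  Adj x y := x ≠ y ∧ G.edist x y ≤ 2
  symm := by
    constructor
    intro x y ⟨h1, h2⟩
    exact ⟨h1.symm, by rwa [SimpleGraph.edist_comm]⟩
  loopless := by constructor; intro x h; exact h.1 rfl

/-- `G` has the bipartite chain property on parts `X`, `Y`: the neighbourhoods of the
vertices within each part are totally ordered by inclusion (equivalently, the vertices
of each part can be ordered so that their neighbourhoods are nested). -/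
def HasChainProperty {V : Type*} (G : SimpleGraph V) (X Y : Set V) : Prop :=
  (∀ x ∈ X, ∀ x' ∈ X, G.neighborSet x ⊆ G.neighborSet x' ∨
      G.neighborSet x' ⊆ G.neighborSet x) ∧
  (∀ y ∈ Y, ∀ y' ∈ Y, G.neighborSet y ⊆ G.neighborSet y' ∨
      G.neighborSet y' ⊆ G.neighborSet y)

/-- The bipartite complement of `G` with respect to parts `X`, `Y`: edges are the
non-edges of `G` across the bipartition. -/
def bipComplement {V : Type*} (G : SimpleGraph V) (X Y : Set V) : SimpleGraph V where
  Adj a b := ((a ∈ X ∧ b ∈ Y) ∨ (a ∈ Y ∧ b ∈ X)) ∧ ¬G.Adj a b ∧ a ≠ b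
  symm := by
    constructor
    intro a b ⟨h1, h2, h3⟩
    exact ⟨by tauto, fun h => h2 h.symm, h3.symm⟩
  loopless := by constructor; intro a h; exact h.2.2 rfl

/-! In a connected graph every vertex has a neighbour, so two distinct vertices with nested
neighbourhoods have a common neighbour; hence each side of a chain graph becomes a clique in `G²`.
Vertices on opposite sides of a bipartite graph have no common neighbour, so `G²` adds no edge
between the sides. Finally, complementing inside the opposite side reverses the inclusions
between neighbourhoods, so the bipartite complement is again a chain graph. -/

namespace SimpleGraph

variable {V : Type*} {G : SimpleGraph V} {u v : V}

theorem square_adj_iff :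
    G.square.Adj u v ↔ u ≠ v ∧ (G.Adj u v ∨ (G.commonNeighbors u v).Nonempty) := by
  change u ≠ v ∧ G.edist u v ≤ 2 ↔ _
  rw [← not_lt, two_lt_edist_iff, Set.nonempty_iff_ne_empty]
  tauto

theorem square_adj_of_neighborSet_subset (hne : u ≠ v) (hu : (G.neighborSet u).Nonempty)
    (h : G.neighborSet u ⊆ G.neighborSet v) : G.square.Adj u v := by
  obtain ⟨w, huw⟩ := hu
  exact square_adj_iff.2 ⟨hne, Or.inr ⟨w, huw, h huw⟩⟩

theorem Preconnected.square_adj_of_neighborSet_subset_or (hG : G.Preconnected) (hne : u ≠ v)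
    (h : G.neighborSet u ⊆ G.neighborSet v ∨ G.neighborSet v ⊆ G.neighborSet u) :
    G.square.Adj u v := by
  have : Nontrivial V := nontrivial_of_ne u v hne
  rcases h with huv | hvu
  · exact square_adj_of_neighborSet_subset hne (hG.exists_adj_of_nontrivial u) huv
  · exact (square_adj_of_neighborSet_subset hne.symm (hG.exists_adj_of_nontrivial v) hvu).symm

theorem IsBipartiteWith.commonNeighbors_eq_empty {s t : Set V} (h : G.IsBipartiteWith s t)
    (hu : u ∈ s) (hv : v ∈ t) : G.commonNeighbors u v = ∅ :=
  Set.eq_empty_of_forall_notMem fun _ hw ↦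
    h.disjoint.ne_of_mem (h.mem_of_mem_adj' hv hw.2.symm) (h.mem_of_mem_adj hu hw.1) rfl

theorem IsBipartiteWith.square_adj_iff {s t : Set V} (h : G.IsBipartiteWith s t)
    (hu : u ∈ s) (hv : v ∈ t) : G.square.Adj u v ↔ G.Adj u v := by
  rw [SimpleGraph.square_adj_iff, h.commonNeighbors_eq_empty hu hv]
  exact ⟨fun ⟨_, hc⟩ ↦ hc.resolve_right Set.not_nonempty_empty, fun huv ↦ ⟨huv.ne, Or.inl huv⟩⟩

end SimpleGraph

section BipartiteComplement

variable {V : Type*} {G : SimpleGraph V} {X Y : Set V}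

theorem bipComplement_comm (G : SimpleGraph V) (X Y : Set V) :
    bipComplement G X Y = bipComplement G Y X := by
  ext a b
  simp only [bipComplement]
  tauto

theorem neighborSet_bipComplement_of_mem_left (hXY : Disjoint X Y) {x : V} (hx : x ∈ X) :
    (bipComplement G X Y).neighborSet x = Y \ G.neighborSet x := by
  ext y
  have hxY : x ∉ Y := hXY.notMem_of_mem_left hx
  simp only [mem_neighborSet, bipComplement, Set.mem_sdiff]
  constructor
  · rintro ⟨⟨-, hy⟩ | ⟨hxY', -⟩, hna, -⟩
    · exact ⟨hy, hna⟩
    · exact absurd hxY' hxY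
  · rintro ⟨hy, hna⟩
    exact ⟨Or.inl ⟨hx, hy⟩, hna, by rintro rfl; exact hxY hy⟩

theorem HasChainProperty.symm (h : HasChainProperty G X Y) : HasChainProperty G Y X :=
  ⟨h.2, h.1⟩

theorem hasChainProperty_bipComplement (hXY : Disjoint X Y) (h : HasChainProperty G X Y) :
    HasChainProperty (bipComplement G X Y) X Y := by
  have chain_left : ∀ {A B : Set V}, Disjoint A B → HasChainProperty G A B → ∀ a ∈ A, ∀ a' ∈ A,
      (bipComplement G A B).neighborSet a ⊆ (bipComplement G A B).neighborSet a' ∨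
        (bipComplement G A B).neighborSet a' ⊆ (bipComplement G A B).neighborSet a := by
    intro A B hAB hAB' a ha a' ha'
    rw [neighborSet_bipComplement_of_mem_left hAB ha, neighborSet_bipComplement_of_mem_left hAB ha']
    exact (hAB'.1 a ha a' ha').symm.imp Set.sdiff_subset_sdiff_right Set.sdiff_subset_sdiff_right
  exact ⟨chain_left hXY h, bipComplement_comm G X Y ▸ chain_left hXY.symm h.symm⟩

end BipartiteComplement

theorem stmt_13_general {V : Type*} (G : SimpleGraph V)
    (X Y : Set V) (hdisj : Disjoint X Y)
    (hbip : ∀ a b : V, G.Adj a b → ((a ∈ X ∧ b ∈ Y) ∨ (a ∈ Y ∧ b ∈ X)))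
    (hchain : HasChainProperty G X Y) (hconn : G.Connected) :
    (∀ x ∈ X, ∀ x' ∈ X, x ≠ x' → G.square.Adj x x') ∧
    (∀ y ∈ Y, ∀ y' ∈ Y, y ≠ y' → G.square.Adj y y') ∧
    (∀ x ∈ X, ∀ y ∈ Y, (G.square.Adj x y ↔ G.Adj x y)) ∧
    HasChainProperty (bipComplement G X Y) X Y := by
  have hG : G.IsBipartiteWith X Y := ⟨hdisj, hbip⟩
  refine ⟨fun x hx x' hx' hne ↦ ?_, fun y hy y' hy' hne ↦ ?_,
    fun x hx y hy ↦ hG.square_adj_iff hx hy, hasChainProperty_bipComplement hdisj hchain⟩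
  · exact hconn.preconnected.square_adj_of_neighborSet_subset_or hne (hchain.1 x hx x' hx')
  · exact hconn.preconnected.square_adj_of_neighborSet_subset_or hne (hchain.2 y hy y' hy')

theorem stmt_13 {V : Type*} [Fintype V] (G : SimpleGraph V)
    (X Y : Set V) (hdisj : Disjoint X Y) (hcover : X ∪ Y = Set.univ)
    (hbip : ∀ a b : V, G.Adj a b → ((a ∈ X ∧ b ∈ Y) ∨ (a ∈ Y ∧ b ∈ X)))
    (hchain : HasChainProperty G X Y) (hconn : G.Connected) :
    (∀ x ∈ X, ∀ x' ∈ X, x ≠ x' → G.square.Adj x x') ∧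
    (∀ y ∈ Y, ∀ y' ∈ Y, y ≠ y' → G.square.Adj y y') ∧
    (∀ x ∈ X, ∀ y ∈ Y, (G.square.Adj x y ↔ G.Adj x y)) ∧
    HasChainProperty (bipComplement G X Y) X Y :=
  stmt_13_general G X Y hdisj hbip hchain hconn
end
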